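/- arXiv:1502.05547 — 8 statements merged into one kernel-verified Lean document; each statement's English description precedes it below -/
import Mathlib

section
/- Let $X$ be a vector space of even dimension $n = 2m \geq 2$ over $\mathbb{F}_q$, and let $X = X_1 \cup \cdots \cup X_t$ be a nontrivial subspace partition of $X$ (so $t > 1$). Then $t \geq q^m + 1$. -/
/-!
Distinct blocks of a subspace partition meet trivially, so any two of their dimensions `dᵢ`
add up to at most `2m`, and counting nonzero vectors gives `∑ (q ^ dᵢ - 1) = q ^ (2m) - 1`.
If every `dᵢ ≤ m`, each block holds at most `q ^ m - 1` nonzero vectors, so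
`t ≥ (q ^ (2m) - 1) / (q ^ m - 1) = q ^ m + 1`. Otherwise some block has dimension `d > m`,
all the others have dimension at most `e = 2m - d`, and the same count yields
`t - 1 ≥ q ^ d (q ^ e - 1) / (q ^ e - 1) = q ^ d > q ^ m`.
-/

open Finset Module

theorem Nat.card_subtype_ne_eq_sub_one {α : Type*} [Finite α] (a : α) :
    Nat.card {x // x ≠ a} = Nat.card α - 1 := by
  classical
  rw [← Nat.card_congr (Equiv.optionSubtypeNe a), Finite.card_option, Nat.add_sub_cancel]

namespace Submodule

variable {R M ι : Type*} [Ring R] [AddCommGroup M] [Module R M] {P : ι → Submodule R M}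

theorem disjoint_of_existsUnique_mem (hpart : ∀ x : M, x ≠ 0 → ∃! i, x ∈ P i) {i j : ι}
    (hij : i ≠ j) : Disjoint (P i) (P j) :=
  disjoint_def.2 fun x hxi hxj => by_contra fun hx => hij ((hpart x hx).unique hxi hxj)

theorem sum_natCard_sub_one_of_existsUnique_mem [Finite M] [Fintype ι]
    (hpart : ∀ x : M, x ≠ 0 → ∃! i, x ∈ P i) :
    ∑ i, (Nat.card (P i) - 1) = Nat.card M - 1 := by
  let f : (Σ i, {x : P i // x ≠ 0}) → {x : M // x ≠ 0} :=
    fun p => ⟨p.2, by simpa using p.2.2⟩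
  have hf : Function.Bijective f := by
    constructor
    · rintro ⟨i, x, hx⟩ ⟨j, y, _⟩ hxy
      have hxy : (x : M) = y := congrArg Subtype.val hxy
      obtain rfl : i = j := (hpart x (by simpa using hx)).unique x.2 (hxy ▸ y.2)
      obtain rfl : x = y := Subtype.ext hxy
      rfl
    · rintro ⟨x, hx⟩
      obtain ⟨i, hi, -⟩ := hpart x hx
      exact ⟨⟨i, ⟨x, hi⟩, by simpa using hx⟩, rfl⟩
  rw [← Nat.card_subtype_ne_eq_sub_one, ← Nat.card_congr (Equiv.ofBijective f hf), Nat.card_sigma]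
  simp only [Nat.card_subtype_ne_eq_sub_one]

end Submodule

section Counting

variable {ι : Type*} {q : ℕ} {d : ι → ℕ}

theorem sum_pow_sub_one_le_card_mul (s : Finset ι) (hq : 0 < q) {k : ℕ}
    (hd : ∀ i ∈ s, d i ≤ k) : ∑ i ∈ s, (q ^ d i - 1) ≤ #s * (q ^ k - 1) := by
  simpa using Finset.sum_le_card_nsmul s _ _ fun i hi =>
    Nat.sub_le_sub_right (Nat.pow_le_pow_right hq (hd i hi)) 1

variable [Fintype ι]

theorem pow_add_one_le_card_of_forall_le (hq : 1 < q) {m : ℕ} (hm : 1 ≤ m)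
    (hd : ∀ i, d i ≤ m) (hsum : ∑ i, (q ^ d i - 1) = q ^ (2 * m) - 1) :
    q ^ m + 1 ≤ Fintype.card ι := by
  have hpos : 0 < q ^ m - 1 := Nat.sub_pos_of_lt (Nat.one_lt_pow (by omega) hq)
  refine Nat.le_of_mul_le_mul_right ?_ hpos
  calc (q ^ m + 1) * (q ^ m - 1) = q ^ (2 * m) - 1 := by
        rw [← Nat.sq_sub_sq, one_pow, ← pow_mul, mul_comm]
    _ = ∑ i, (q ^ d i - 1) := hsum.symm
    _ ≤ Fintype.card ι * (q ^ m - 1) :=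
        sum_pow_sub_one_le_card_mul univ (by omega) fun i _ => hd i

theorem pow_add_one_le_card_of_add_le [DecidableEq ι] (hq : 1 < q) {n : ℕ}
    (hsum : ∑ i, (q ^ d i - 1) = q ^ n - 1) {i₀ : ι} (hlt : d i₀ < n)
    (hcompl : ∀ j, j ≠ i₀ → d i₀ + d j ≤ n) : q ^ d i₀ + 1 ≤ Fintype.card ι := by
  set e := n - d i₀
  have hpos : 0 < q ^ e - 1 := Nat.sub_pos_of_lt (Nat.one_lt_pow (by omega) hq)
  have hrest : ∑ j ∈ univ.erase i₀, (q ^ d j - 1) = q ^ d i₀ * (q ^ e - 1) := by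
    have hsplit := add_sum_erase univ (fun i => q ^ d i - 1) (mem_univ i₀)
    have hn : q ^ n = q ^ d i₀ * q ^ e := by rw [← pow_add]; congr; omega
    have : 1 ≤ q ^ d i₀ := Nat.one_le_pow _ _ (by omega)
    rw [Nat.mul_sub_one]
    omega
  have hle : q ^ d i₀ ≤ Fintype.card ι - 1 := by
    refine Nat.le_of_mul_le_mul_right ?_ hpos
    calc q ^ d i₀ * (q ^ e - 1) = ∑ j ∈ univ.erase i₀, (q ^ d j - 1) := hrest.symm
      _ ≤ #(univ.erase i₀) * (q ^ e - 1) :=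
          sum_pow_sub_one_le_card_mul _ (by omega) fun j hj => by
            have := hcompl j (ne_of_mem_erase hj)
            omega
      _ = (Fintype.card ι - 1) * (q ^ e - 1) := by
          rw [card_erase_of_mem (mem_univ _), card_univ]
  have : 0 < Fintype.card ι := Fintype.card_pos_iff.mpr ⟨i₀⟩
  omega

end Counting

theorem partition_number_even
    {K X : Type*} [Field K] [Fintype K] [AddCommGroup X] [Module K X] [FiniteDimensional K X]
    (m : ℕ) (hm : 1 ≤ m) (hdim : Module.finrank K X = 2 * m)
    (t : ℕ) (ht : 1 < t) (P : Fin t → Submodule K X)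
    (hne : ∀ i, P i ≠ ⊥)
    (hpart : ∀ x : X, x ≠ 0 → ∃! i, x ∈ P i) :
    Fintype.card K ^ m + 1 ≤ t := by
  have : Finite X := Module.finite_of_finite K
  set q := Fintype.card K
  have hq : 1 < q := Fintype.one_lt_card
  set d : Fin t → ℕ := fun i => finrank K (P i)
  have hcard (V : Submodule K X) : Nat.card V = q ^ finrank K V := by
    rw [natCard_eq_pow_finrank (K := K), Nat.card_eq_fintype_card]
  have hcardX : Nat.card X = q ^ (2 * m) := by
    rw [natCard_eq_pow_finrank (K := K), hdim, Nat.card_eq_fintype_card]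
  have hsum : ∑ i, (q ^ d i - 1) = q ^ (2 * m) - 1 := by
    simpa only [hcard, hcardX]
      using Submodule.sum_natCard_sub_one_of_existsUnique_mem hpart
  have hd_add (i j : Fin t) (hij : i ≠ j) : d i + d j ≤ 2 * m :=
    hdim ▸ Submodule.finrank_add_finrank_le_of_disjoint
      (Submodule.disjoint_of_existsUnique_mem hpart hij)
  by_cases hsmall : ∀ i, d i ≤ m
  · simpa using pow_add_one_le_card_of_forall_le hq hm hsmall hsum
  obtain ⟨i₀, hi₀⟩ : ∃ i, m < d i := by simpa using hsmall
  have := Fin.nontrivial_iff_two_le.mpr ht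
  obtain ⟨j, hj⟩ := exists_ne i₀
  have hdj : 0 < d j := Nat.pos_of_ne_zero (Submodule.finrank_eq_zero.not.mpr (hne j))
  calc q ^ m + 1 ≤ q ^ d i₀ + 1 := by gcongr; omega
    _ ≤ t := by
      simpa using pow_add_one_le_card_of_add_le hq hsum (by have := hd_add i₀ j hj.symm; omega)
        fun j hj => hd_add i₀ j hj.symm
end

section
/- Let $X$ be a vector space of odd dimension $2m+1$ over $\mathbb{F}_q$, where $m \geq 1$. Then there exists a subspace partition of $X$ into exactly $q^{m+1} + 1$ subspaces, consisting of one subspace of dimension $m+1$ and $q^{m+1}$ subspaces of dimension $m$. In particular, the lower bound $q^{m+1}+1$ for the number of parts of a nontrivial subspace partition of a $(2m+1)$-dimensional space is attained. -/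
/-!
Let `L` be the field with `q ^ (m + 1)` elements and `H` a `K`-hyperplane of `L`. The Desarguesian
spread of `L × L`, made of `0 × L` and the lines `{(x, a * x)}` for `a ∈ L`, cuts the hyperplane
`L × H` of `L × L` into `q ^ (m + 1) + 1` parts: the line `L × 0` of `a = 0` lies in `L × H`, and
every other member meets `L × H` in a copy of `H`, of dimension `m`.
-/

theorem Submodule.exists_finrank_eq {K V : Type*} [DivisionRing K] [AddCommGroup V] [Module K V]
    [FiniteDimensional K V] {n : ℕ} (hn : n ≤ Module.finrank K V) :
    ∃ W : Submodule K V, Module.finrank K W = n :=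
  ⟨_, (finrank_span_eq_card ((Module.finBasis K V).linearIndependent.comp _
    (Fin.castLE_injective hn))).trans (Fintype.card_fin n)⟩

def IsSubspacePartition {K V ι : Type*} [Semiring K] [AddCommMonoid V] [Module K V]
    (P : ι → Submodule K V) : Prop :=
  (∀ i, P i ≠ ⊥) ∧ ∀ x : V, x ≠ 0 → ∃! i, x ∈ P i

theorem IsSubspacePartition.map_linearEquiv {K V W ι κ : Type*} [Semiring K] [AddCommMonoid V]
    [Module K V] [AddCommMonoid W] [Module K W] {P : ι → Submodule K V}
    (hP : IsSubspacePartition P) (e : V ≃ₗ[K] W) (σ : κ ≃ ι) :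
    IsSubspacePartition fun k => (P (σ k)).map (e : V →ₗ[K] W) := by
  refine ⟨fun k => by simpa only [Ne, Submodule.map_eq_bot_iff] using hP.1 (σ k), fun x hx => ?_⟩
  simp only [Submodule.mem_map_equiv]
  obtain ⟨i, hi, huniq⟩ := hP.2 (e.symm x) (by simpa using hx)
  exact ⟨σ.symm i, by simpa using hi, fun k hk => σ.eq_symm_apply.mpr (huniq _ hk)⟩

namespace Submodule

variable {K L : Type*} [Field K] [DivisionRing L] [Algebra K L] (H : Submodule K L)

/-- The trace on `L × H` of the Desarguesian spread of `L × L`: `none` stands for `0 × L` and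
`some a` for the line `{(x, a * x)}`. -/
def spreadTrace : Option L → Submodule K (L × H)
  | none => LinearMap.ker (LinearMap.fst K L H)
  | some a =>
    LinearMap.ker (LinearMap.mulLeft K a ∘ₗ LinearMap.fst K L H - H.subtype ∘ₗ LinearMap.snd K L H)

@[simp]
theorem mem_spreadTrace_none {w : L × H} : w ∈ H.spreadTrace none ↔ w.1 = 0 := Iff.rfl

@[simp]
theorem mem_spreadTrace_some {a : L} {w : L × H} : w ∈ H.spreadTrace (some a) ↔ a * w.1 = w.2 :=
  sub_eq_zero

theorem existsUnique_mem_spreadTrace {w : L × H} (hw : w ≠ 0) : ∃! o, w ∈ H.spreadTrace o := by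
  obtain ⟨x, h⟩ := w
  by_cases hx : x = 0
  · have hh : h ≠ 0 := fun hh => hw (by simp [hx, hh])
    refine ⟨none, hx, ?_⟩
    rintro (_ | a) ha
    · rfl
    · simp [hx, eq_comm, hh] at ha
  · refine ⟨some (h * x⁻¹), by simp [hx], ?_⟩
    rintro (_ | a) ha
    · simp_all
    · simp only [mem_spreadTrace_some] at ha
      simp [← ha, hx]

theorem spreadTrace_some_zero : H.spreadTrace (some 0) = LinearMap.ker (LinearMap.snd K L H) := by
  ext w
  simp [eq_comm]

theorem finrank_spreadTrace_none : Module.finrank K (H.spreadTrace none) = Module.finrank K H := by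
  rw [spreadTrace, LinearMap.ker_fst, LinearMap.finrank_range_of_inj LinearMap.inr_injective]

theorem finrank_spreadTrace_some_zero :
    Module.finrank K (H.spreadTrace (some 0)) = Module.finrank K L := by
  rw [spreadTrace_some_zero, LinearMap.ker_snd,
    LinearMap.finrank_range_of_inj LinearMap.inl_injective]

variable [FiniteDimensional K L]

theorem finrank_spreadTrace_some {a : L} (ha : a ≠ 0) :
    Module.finrank K (H.spreadTrace (some a)) = Module.finrank K H := by
  set f := LinearMap.mulLeft K a ∘ₗ LinearMap.fst K L H - H.subtype ∘ₗ LinearMap.snd K L H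
  have hf : LinearMap.range f = ⊤ :=
    LinearMap.range_eq_top.mpr fun y => ⟨(a⁻¹ * y, 0), by simp [f, ha]⟩
  have := f.finrank_range_add_finrank_ker
  rw [hf, finrank_top, Module.finrank_prod] at this
  exact Nat.add_left_cancel this

theorem finrank_spreadTrace_of_ne {o : Option L} (ho : o ≠ some 0) :
    Module.finrank K (H.spreadTrace o) = Module.finrank K H := by
  rcases o with _ | a
  · exact H.finrank_spreadTrace_none
  · exact H.finrank_spreadTrace_some fun ha => ho (congrArg some ha)

theorem isSubspacePartition_spreadTrace (hH : H ≠ ⊥) : IsSubspacePartition H.spreadTrace := by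
  refine ⟨fun o => ?_, fun w hw => H.existsUnique_mem_spreadTrace hw⟩
  rw [Ne, ← Submodule.finrank_eq_zero]
  by_cases ho : o = some 0
  · rw [ho, finrank_spreadTrace_some_zero]
    exact Module.finrank_pos.ne'
  · rw [H.finrank_spreadTrace_of_ne ho, Submodule.finrank_eq_zero]
    exact hH

end Submodule

theorem optimal_partition_odd_dimension
    {K X : Type*} [Field K] [Fintype K] [AddCommGroup X] [Module K X] [FiniteDimensional K X]
    (m : ℕ) (hm : 1 ≤ m) (hdim : Module.finrank K X = 2 * m + 1) :
    ∃ P : Fin (Fintype.card K ^ (m + 1) + 1) → Submodule K X,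
      (∀ i, P i ≠ ⊥) ∧
      (∀ x : X, x ≠ 0 → ∃! i, x ∈ P i) ∧
      ∃ i₀, Module.finrank K (P i₀) = m + 1 ∧
        ∀ i, i ≠ i₀ → Module.finrank K (P i) = m := by
  obtain ⟨p, _⟩ := CharP.exists K
  have : Fact p.Prime := ⟨CharP.char_is_prime K p⟩
  let L := FiniteField.Extension K p (m + 1)
  have hL : Module.finrank K L = m + 1 := FiniteField.finrank_extension K p (m + 1)
  obtain ⟨H, hH⟩ := Submodule.exists_finrank_eq (by omega : m ≤ Module.finrank K L)
  have hH_ne_bot : H ≠ ⊥ := by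
    rw [Ne, ← Submodule.finrank_eq_zero, hH]
    omega
  obtain ⟨ψ⟩ : Nonempty ((L × H) ≃ₗ[K] X) :=
    FiniteDimensional.nonempty_linearEquiv_of_finrank_eq <| by
      rw [Module.finrank_prod, hL, hH, hdim]; ring
  have hcard : Nat.card L = Fintype.card K ^ (m + 1) := by
    rw [FiniteField.natCard_extension, Nat.card_eq_fintype_card]
  let σ : Fin (Fintype.card K ^ (m + 1) + 1) ≃ Option L :=
    (finSuccEquiv _).trans (Equiv.optionCongr (Finite.equivFinOfCardEq hcard).symm)
  obtain ⟨hne, hcover⟩ := (H.isSubspacePartition_spreadTrace hH_ne_bot).map_linearEquiv ψ σ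
  refine ⟨_, hne, hcover, σ.symm (some 0), ?_, fun i hi => ?_⟩
  · rw [LinearEquiv.finrank_map_eq, σ.apply_symm_apply, H.finrank_spreadTrace_some_zero, hL]
  · rw [LinearEquiv.finrank_map_eq, H.finrank_spreadTrace_of_ne (σ.eq_symm_apply.not.mp hi), hH]
end

section
/- Let $V$ be a vector space of odd dimension $n = 2m - 1 \geq 3$ over $\mathbb{F}_q$. Then there exists an $m$-dimensional constant rank $n-1$ subspace $\mathcal{M}$ of the space of symmetric bilinear forms on $V$ in which any two linearly independent forms have different radicals. -/
/-- The rank of a bilinear form `f` on `V`: `dim V - dim (rad f)`, where the radical of a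
symmetric bilinear form is the kernel of the associated linear map `V →ₗ (V →ₗ K)`. -/
noncomputable def formRank (K : Type*) {V : Type*} [Field K] [AddCommGroup V] [Module K V]
    (f : V →ₗ[K] V →ₗ[K] K) : ℕ :=
  Module.finrank K V - Module.finrank K (LinearMap.ker f)

/-!
Take finite fields `K ⊆ E ⊆ L` with `[E : K] = m` and `[L : K] = 2m`, a nonzero functional
`τ : L → K` vanishing on `E`, and identify `V` with `ker τ`. For `b ∈ E` take the form
`(x, y) ↦ τ (b x y)` on `ker τ`. Its radical consists of the `x` for which multiplication by `b x`
maps `ker τ` into itself; as `dim ker τ = 2m - 1` is coprime to `[L : K]`, this forces `b x ∈ K`.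
So the radical is `K b⁻¹`, which lies in `ker τ` because `b⁻¹ ∈ E`: every nonzero form has rank
`n - 1`, and the radical determines `b` up to a scalar.
-/

open Module IntermediateField

theorem IntermediateField.mem_bot_of_forall_mul_mem_of_coprime {K L : Type*} [Field K] [Field L]
    [Algebra K L] [FiniteDimensional K L] (W : Submodule K L)
    (hW : (finrank K L).Coprime (finrank K W)) {u : L} (hu : ∀ z ∈ W, u * z ∈ W) :
    u ∈ (⊥ : IntermediateField K L) := by
  let S : Subalgebra K L :=
    { carrier := {w | ∀ z ∈ W, w * z ∈ W}
      mul_mem' := fun ha hb z hz => by simpa only [mul_assoc] using ha _ (hb z hz)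
      add_mem' := fun ha hb z hz => by simpa only [add_mul] using W.add_mem (ha z hz) (hb z hz)
      algebraMap_mem' := fun c z hz => by simpa only [Algebra.smul_def] using W.smul_mem c hz }
  have hS : K⟮u⟯.toSubalgebra ≤ S := by
    rw [adjoin_simple_toSubalgebra_of_isAlgebraic (Algebra.IsAlgebraic.isAlgebraic u)]
    exact Algebra.adjoin_le (Set.singleton_subset_iff.mpr hu)
  let N : Submodule K⟮u⟯ L :=
    { W with smul_mem' := fun c z hz => by rw [Algebra.smul_def]; exact hS c.2 z hz }
  have hdvd : finrank K K⟮u⟯ ∣ finrank K W :=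
    ⟨_, (finrank_mul_finrank K K⟮u⟯ N).symm⟩
  have hone : finrank K K⟮u⟯ = 1 :=
    Nat.dvd_one.mp (hW ▸ Nat.dvd_gcd ⟨_, (finrank_mul_finrank K K⟮u⟯ L).symm⟩ hdvd)
  exact adjoin_simple_eq_bot_iff.mp (finrank_eq_one_iff.mp hone)

theorem IntermediateField.mem_bot_of_forall_apply_mul_eq_zero {K L : Type*} [Field K] [Field L]
    [Algebra K L] [FiniteDimensional K L] {τ : L →ₗ[K] K} (hτ : τ ≠ 0) {u : L}
    (hu : ∀ z ∈ LinearMap.ker τ, τ (u * z) = 0) : u ∈ (⊥ : IntermediateField K L) := by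
  refine mem_bot_of_forall_mul_mem_of_coprime (LinearMap.ker τ) ?_ hu
  rw [← Module.Dual.finrank_ker_add_one_of_ne_zero hτ]
  exact Nat.coprime_self_add_left.mpr (Nat.coprime_one_left _)

section MulForm

variable {K L V : Type*} [Field K] [Field L] [Algebra K L] [AddCommGroup V] [Module K V]
  {τ : L →ₗ[K] K} {ι : V →ₗ[K] L}

variable (τ ι) in
def mulForm : L →ₗ[K] V →ₗ[K] V →ₗ[K] K :=
  (((LinearMap.mul K L).compr₂ ((LinearMap.mul K L).compr₂ τ)).compl₂ ι).compr₂
    (LinearMap.lcomp K K ι)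

@[simp]
theorem mulForm_apply (b : L) (x y : V) : mulForm τ ι b x y = τ (b * ι x * ι y) := rfl

theorem mulForm_apply_comm (b : L) (x y : V) : mulForm τ ι b x y = mulForm τ ι b y x := by
  simp only [mulForm_apply, mul_right_comm]

variable [FiniteDimensional K L]

theorem mulForm_apply_eq_zero_iff (hτ : τ ≠ 0) (hι : LinearMap.range ι = LinearMap.ker τ)
    (b : L) (x : V) : mulForm τ ι b x = 0 ↔ b * ι x ∈ (⊥ : IntermediateField K L) := by
  constructor
  · intro h
    refine mem_bot_of_forall_apply_mul_eq_zero hτ fun z hz => ?_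
    obtain ⟨y, rfl⟩ := hι ▸ hz
    exact LinearMap.congr_fun h y
  · intro h
    obtain ⟨c, hc⟩ := IntermediateField.mem_bot.mp h
    ext y
    have hy : τ (ι y) = 0 := by rw [← LinearMap.mem_ker, ← hι]; exact LinearMap.mem_range_self ι y
    rw [mulForm_apply, ← hc, ← Algebra.smul_def, map_smul, hy, smul_zero, LinearMap.zero_apply]

theorem ker_mulForm (hτ : τ ≠ 0) (hι : LinearMap.range ι = LinearMap.ker τ) {b : L}
    (hb : b ≠ 0) : LinearMap.ker (mulForm τ ι b) = (K ∙ b⁻¹).comap ι := by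
  ext x
  rw [LinearMap.mem_ker, mulForm_apply_eq_zero_iff hτ hι, Submodule.mem_comap,
    Submodule.mem_span_singleton, IntermediateField.mem_bot]
  simp only [Set.mem_range, Algebra.smul_def, ← div_eq_mul_inv, div_eq_iff hb, mul_comm b]

theorem map_ker_mulForm (hτ : τ ≠ 0) (hι : LinearMap.range ι = LinearMap.ker τ) {b : L}
    (hb : b ≠ 0) (hτb : τ b⁻¹ = 0) : (LinearMap.ker (mulForm τ ι b)).map ι = K ∙ b⁻¹ := by
  rw [ker_mulForm hτ hι hb, Submodule.map_comap_eq_of_le]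
  rwa [hι, Submodule.span_singleton_le_iff_mem]

theorem finrank_ker_mulForm (hτ : τ ≠ 0) (hι : LinearMap.range ι = LinearMap.ker τ)
    (hιinj : Function.Injective ι) {b : L} (hb : b ≠ 0) (hτb : τ b⁻¹ = 0) :
    finrank K (LinearMap.ker (mulForm τ ι b)) = 1 := by
  rw [(Submodule.equivMapOfInjective ι hιinj _).finrank_eq, map_ker_mulForm hτ hι hb hτb,
    finrank_span_singleton (inv_ne_zero hb)]

theorem exists_smul_eq_of_ker_mulForm_eq (hτ : τ ≠ 0) (hι : LinearMap.range ι = LinearMap.ker τ)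
    {b c : L} (hb : b ≠ 0) (hc : c ≠ 0) (hτb : τ b⁻¹ = 0) (hτc : τ c⁻¹ = 0)
    (h : LinearMap.ker (mulForm τ ι b) = LinearMap.ker (mulForm τ ι c)) : ∃ t : K, c = t • b := by
  have hspan : K ∙ b⁻¹ = K ∙ c⁻¹ := by
    rw [← map_ker_mulForm hτ hι hb hτb, ← map_ker_mulForm hτ hι hc hτc, h]
  obtain ⟨t, ht⟩ :=
    Submodule.mem_span_singleton.mp (hspan ▸ Submodule.mem_span_singleton_self b⁻¹)
  refine ⟨t, ?_⟩
  rw [Algebra.smul_def] at ht ⊢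
  field_simp at ht
  exact ht.symm

end MulForm

theorem exists_symmetric_forms_of_algHom {K E L V : Type*} [Field K] [Field E] [Field L]
    [Algebra K E] [Algebra K L] [AddCommGroup V] [Module K V] (φ : E →ₐ[K] L)
    (hEL : finrank K E < finrank K L) (hVL : finrank K V + 1 = finrank K L)
    (hV : 2 ≤ finrank K V) :
    ∃ M : Submodule K (V →ₗ[K] V →ₗ[K] K),
      finrank K M = finrank K E ∧
      (∀ f ∈ M, ∀ x y : V, f x y = f y x) ∧
      (∀ f ∈ M, f ≠ 0 → finrank K (LinearMap.ker f) = 1) ∧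
      (∀ f ∈ M, ∀ g ∈ M, LinearIndependent K ![f, g] →
        LinearMap.ker f ≠ LinearMap.ker g) := by
  have : FiniteDimensional K V := Module.finite_of_finrank_pos (by omega)
  have : FiniteDimensional K L := Module.finite_of_finrank_pos (by omega)
  obtain ⟨τ, hτ, hφτ⟩ := (LinearMap.range φ.toLinearMap).exists_le_ker_of_lt_top
    (Submodule.lt_top_of_finrank_lt_finrank
      ((LinearMap.finrank_range_of_inj φ.toRingHom.injective).trans_lt hEL))
  have hτφ (a : E) : τ (φ a)⁻¹ = 0 := by
    rw [← map_inv₀]; exact hφτ (LinearMap.mem_range_self φ.toLinearMap a⁻¹)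
  let e : V ≃ₗ[K] LinearMap.ker τ := LinearEquiv.ofFinrankEq _ _ (by
    have := Module.Dual.finrank_ker_add_one_of_ne_zero hτ; omega)
  let ι := (LinearMap.ker τ).subtype ∘ₗ e.toLinearMap
  have hι : LinearMap.range ι = LinearMap.ker τ := by
    rw [LinearMap.range_comp, LinearEquiv.range, Submodule.map_top, Submodule.range_subtype]
  have hιinj : Function.Injective ι := Subtype.val_injective.comp e.injective
  let Ψ := mulForm τ ι ∘ₗ φ.toLinearMap
  have hker (a : E) (ha : a ≠ 0) : finrank K (LinearMap.ker (Ψ a)) = 1 :=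
    finrank_ker_mulForm hτ hι hιinj (by simpa using ha) (hτφ a)
  have hΨ : Function.Injective Ψ := by
    refine (injective_iff_map_eq_zero Ψ).mpr fun a h => by_contra fun ha => ?_
    have := hker a ha
    rw [h, LinearMap.ker_zero, finrank_top] at this
    omega
  refine ⟨LinearMap.range Ψ, LinearMap.finrank_range_of_inj hΨ, ?_, ?_, ?_⟩
  · rintro _ ⟨a, rfl⟩ x y
    exact mulForm_apply_comm _ x y
  · rintro _ ⟨a, rfl⟩ h
    exact hker a (by rintro rfl; exact h (map_zero Ψ))
  · rintro _ ⟨a, rfl⟩ _ ⟨c, rfl⟩ hind h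
    have ha : a ≠ 0 := by rintro rfl; exact hind.ne_zero 0 (map_zero Ψ)
    have hc : c ≠ 0 := by rintro rfl; exact hind.ne_zero 1 (map_zero Ψ)
    obtain ⟨t, ht⟩ := exists_smul_eq_of_ker_mulForm_eq hτ hι (by simpa using ha)
      (by simpa using hc) (hτφ a) (hτφ c) h
    have hΨc : Ψ c = t • Ψ a := by
      simp only [Ψ, LinearMap.comp_apply, AlgHom.toLinearMap_apply, ht, map_smul]
    exact one_ne_zero (hind.eq_zero_of_pair' (s := t) (t := 1) (by rw [one_smul, hΨc])).2

theorem different_radicals_odd_dimension_general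
    {K V : Type*} [Field K] [Fintype K] [AddCommGroup V] [Module K V]
    (m : ℕ) (hm : 2 ≤ m) (hn : Module.finrank K V = 2 * m - 1) :
    ∃ M : Submodule K (V →ₗ[K] V →ₗ[K] K),
      M ≠ ⊥ ∧
      Module.finrank K M = m ∧
      (∀ f ∈ M, ∀ x y : V, f x y = f y x) ∧
      (∀ f ∈ M, f ≠ 0 → formRank K f = (2 * m - 1) - 1) ∧
      (∀ f ∈ M, ∀ g ∈ M, LinearIndependent K ![f, g] →
        LinearMap.ker f ≠ LinearMap.ker g) := by
  obtain ⟨p, _⟩ := CharP.exists K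
  have : Fact p.Prime := ⟨CharP.char_is_prime K p⟩
  have : NeZero m := ⟨by omega⟩
  have : NeZero (2 * m) := ⟨by omega⟩
  obtain ⟨φ⟩ : Nonempty (FiniteField.Extension K p m →ₐ[K] FiniteField.Extension K p (2 * m)) :=
    FiniteField.nonempty_algHom_of_finrank_dvd (by
      simp only [FiniteField.finrank_extension, dvd_mul_left])
  obtain ⟨M, hM, hsymm, hrank, hrad⟩ := exists_symmetric_forms_of_algHom (V := V) φ
    (by simp only [FiniteField.finrank_extension]; omega)
    (by rw [FiniteField.finrank_extension, hn]; omega) (by omega)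
  rw [FiniteField.finrank_extension] at hM
  refine ⟨M, fun hM0 => ?_, hM, hsymm, fun f hf hf0 => ?_, hrad⟩
  · rw [hM0, finrank_bot] at hM
    omega
  · rw [formRank, hrank f hf hf0, hn]

theorem different_radicals_odd_dimension
    {K V : Type*} [Field K] [Fintype K] [AddCommGroup V] [Module K V] [FiniteDimensional K V]
    (m : ℕ) (hm : 2 ≤ m) (hn : Module.finrank K V = 2 * m - 1) :
    ∃ M : Submodule K (V →ₗ[K] V →ₗ[K] K),
      M ≠ ⊥ ∧
      Module.finrank K M = m ∧
      (∀ f ∈ M, ∀ x y : V, f x y = f y x) ∧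
      (∀ f ∈ M, f ≠ 0 → formRank K f = (2 * m - 1) - 1) ∧
      (∀ f ∈ M, ∀ g ∈ M, LinearIndependent K ![f, g] →
        LinearMap.ker f ≠ LinearMap.ker g) :=
  different_radicals_odd_dimension_general m hm hn
end

section
/- Let $V$ be a vector space of even dimension $n \geq 3$ over $\mathbb{F}_q$ such that $n + 1 = 3m$ is divisible by $3$. Then there exists an $m$-dimensional constant rank $n-1$ subspace $\mathcal{M}$ of the space of symmetric bilinear forms on $V$ in which any two linearly independent forms have different radicals. -/
open Module Algebra

section Trace

variable {K L : Type*} [Field K] [Field L] [Algebra K L] [FiniteDimensional K L]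
  [Algebra.IsSeparable K L]

theorem Algebra.exists_algebraMap_eq_of_forall_trace_mul_eq_zero {u : L}
    (hu : ∀ y, trace K L y = 0 → trace K L (u * y) = 0) : ∃ c : K, algebraMap K L c = u := by
  obtain ⟨e, he⟩ := Algebra.trace_surjective K L 1
  have key : ∀ y, trace K L (u * y) = trace K L (u * e) * trace K L y := fun y => by
    have h := hu (y - trace K L y • e) (by simp [he])
    rw [mul_sub, map_sub, mul_smul_comm, map_smul, smul_eq_mul, sub_eq_zero] at h
    rw [h, mul_comm]
  refine ⟨trace K L (u * e), sub_eq_zero.mp ((traceForm_nondegenerate K L).1 _ fun y => ?_)⟩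
  rw [traceForm_apply, sub_mul, map_sub, ← Algebra.smul_def, map_smul, key y, smul_eq_mul,
    sub_self]

theorem Algebra.finrank_ker_trace_add_one :
    finrank K (LinearMap.ker (trace K L)) + 1 = finrank K L := by
  have := LinearMap.finrank_range_add_finrank_ker (trace K L)
  rw [LinearMap.range_eq_top.mpr (Algebra.trace_surjective K L), finrank_top, finrank_self] at this
  omega

theorem exists_injective_range_eq_ker_trace {V : Type*} [AddCommGroup V] [Module K V]
    [FiniteDimensional K V] (hV : finrank K V + 1 = finrank K L) :
    ∃ j : V →ₗ[K] L, Function.Injective j ∧ LinearMap.range j = LinearMap.ker (trace K L) := by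
  let e : V ≃ₗ[K] LinearMap.ker (trace K L) :=
    LinearEquiv.ofFinrankEq _ _ (by have := finrank_ker_trace_add_one (K := K) (L := L); omega)
  refine ⟨(LinearMap.ker (trace K L)).subtype ∘ₗ e.toLinearMap,
    (Submodule.injective_subtype _).comp e.injective, ?_⟩
  rw [LinearMap.range_comp, LinearEquiv.range, Submodule.map_top, Submodule.range_subtype]

end Trace

section TwistedTraceForm

variable {K L V : Type*} [Field K] [Field L] [Algebra K L] [AddCommGroup V] [Module K V]

variable (K) in
noncomputable def twistedTraceForm (j : V →ₗ[K] L) : L →ₗ[K] V →ₗ[K] V →ₗ[K] K where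
  toFun a := (traceForm K L ∘ₗ LinearMap.mulLeft K a).compl₁₂ j j
  map_add' _ _ := by ext; simp [add_mul]
  map_smul' _ _ := by ext; simp

variable {j : V →ₗ[K] L}

@[simp]
theorem twistedTraceForm_apply (a : L) (x y : V) :
    twistedTraceForm K j a x y = trace K L (a * j x * j y) := rfl

theorem twistedTraceForm_comm (a : L) (x y : V) :
    twistedTraceForm K j a x y = twistedTraceForm K j a y x := by
  simp only [twistedTraceForm_apply, mul_right_comm]

variable [FiniteDimensional K L] [Algebra.IsSeparable K L]
  (hj : LinearMap.range j = LinearMap.ker (trace K L))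
include hj

theorem ker_twistedTraceForm {a : L} (ha : a ≠ 0) :
    LinearMap.ker (twistedTraceForm K j a) = (K ∙ a⁻¹).comap j := by
  ext x
  simp only [LinearMap.mem_ker, Submodule.mem_comap, Submodule.mem_span_singleton]
  constructor
  · intro hx
    obtain ⟨c, hc⟩ := exists_algebraMap_eq_of_forall_trace_mul_eq_zero (K := K) (u := a * j x)
      fun y hy => by
        obtain ⟨z, rfl⟩ : y ∈ LinearMap.range j := hj ▸ hy
        simpa using LinearMap.congr_fun hx z
    refine ⟨c, ?_⟩
    rw [Algebra.smul_def, hc, mul_right_comm, mul_inv_cancel₀ ha, one_mul]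
  · rintro ⟨c, hc⟩
    ext y
    have hy : j y ∈ LinearMap.ker (trace K L) := hj ▸ LinearMap.mem_range_self j y
    rw [twistedTraceForm_apply, ← hc, mul_smul_comm, mul_inv_cancel₀ ha, smul_mul_assoc, one_mul,
      map_smul, LinearMap.mem_ker.mp hy, smul_zero, LinearMap.zero_apply]

variable (hj_inj : Function.Injective j)
include hj_inj

theorem ker_twistedTraceForm_eq_span {a : L} (ha : a ≠ 0) {v : V} (hv : j v = a⁻¹) :
    LinearMap.ker (twistedTraceForm K j a) = K ∙ v := by
  rw [ker_twistedTraceForm hj ha, ← hv, ← Set.image_singleton, ← Submodule.map_span,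
    Submodule.comap_map_eq_of_injective hj_inj]

theorem formRank_twistedTraceForm {a : L} (ha : a ≠ 0) {v : V} (hv : j v = a⁻¹) :
    formRank K (twistedTraceForm K j a) = finrank K V - 1 := by
  have hv0 : v ≠ 0 := by rintro rfl; exact inv_ne_zero ha (by rw [← hv, map_zero])
  rw [formRank, ker_twistedTraceForm_eq_span hj hj_inj ha hv, finrank_span_singleton hv0]

theorem twistedTraceForm_ne_zero (hV : 2 ≤ finrank K V) {a : L} (ha : a ≠ 0) {v : V}
    (hv : j v = a⁻¹) : twistedTraceForm K j a ≠ 0 := by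
  intro h0
  have := formRank_twistedTraceForm hj hj_inj ha hv
  rw [h0, formRank, LinearMap.ker_zero, finrank_top, Nat.sub_self] at this
  omega

theorem exists_smul_eq_of_ker_twistedTraceForm_eq {a a' : L} (ha : a ≠ 0) (ha' : a' ≠ 0)
    {v v' : V} (hv : j v = a⁻¹) (hv' : j v' = a'⁻¹)
    (h : LinearMap.ker (twistedTraceForm K j a) = LinearMap.ker (twistedTraceForm K j a')) :
    ∃ c : K, c • a = a' := by
  rw [ker_twistedTraceForm_eq_span hj hj_inj ha hv, ker_twistedTraceForm_eq_span hj hj_inj ha' hv',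
    Submodule.span_singleton_eq_span_singleton] at h
  obtain ⟨z, hz⟩ := h
  refine ⟨(z⁻¹ : Kˣ), ?_⟩
  have := congrArg (·⁻¹) (congrArg j hz)
  simp only [Units.smul_def, map_smul, hv, hv', inv_inv] at this
  rw [← this, smul_inv₀, inv_inv, Units.val_inv_eq_inv_val]

end TwistedTraceForm

section Tower

variable {K F L : Type*} [Field K] [Field F] [Field L] [Algebra K F] [Algebra F L] [Algebra K L]
  [IsScalarTower K F L] [FiniteDimensional K F] [FiniteDimensional F L]

theorem exists_injective_trace_inv_eq_zero (hFL : 1 < finrank F L) :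
    ∃ φ : F →ₗ[K] L, Function.Injective φ ∧ ∀ c ≠ 0, trace K L (φ c)⁻¹ = 0 := by
  obtain ⟨γ, hγ, hγ0⟩ := Submodule.exists_mem_ne_zero_of_ne_bot
    (LinearMap.ker_ne_bot_of_finrank_lt (f := trace F L) (by rwa [finrank_self]))
  refine ⟨LinearMap.mulLeft K γ⁻¹ ∘ₗ (IsScalarTower.toAlgHom K F L).toLinearMap,
    (mul_right_injective₀ (inv_ne_zero hγ0)).comp (algebraMap F L).injective, fun c hc => ?_⟩
  have hγc : (γ⁻¹ * algebraMap F L c)⁻¹ = c⁻¹ • γ := by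
    rw [mul_inv, inv_inv, ← map_inv₀, mul_comm, ← Algebra.smul_def]
  change trace K L (γ⁻¹ * algebraMap F L c)⁻¹ = 0
  rw [hγc, ← trace_trace (S := F), map_smul, LinearMap.mem_ker.mp hγ, smul_zero, map_zero]

theorem exists_constantRank_submodule_of_isScalarTower {V : Type*} [AddCommGroup V] [Module K V]
    [FiniteDimensional K V] [Algebra.IsSeparable K L]
    (hFL : 2 < finrank F L) (hV : finrank K V + 1 = finrank K L) :
    ∃ M : Submodule K (V →ₗ[K] V →ₗ[K] K),
      M ≠ ⊥ ∧
      finrank K M = finrank K F ∧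
      (∀ f ∈ M, ∀ x y : V, f x y = f y x) ∧
      (∀ f ∈ M, f ≠ 0 → formRank K f = finrank K V - 1) ∧
      (∀ f ∈ M, ∀ g ∈ M, LinearIndependent K ![f, g] →
        LinearMap.ker f ≠ LinearMap.ker g) := by
  have : FiniteDimensional K L := .trans K F L
  have hV2 : 2 ≤ finrank K V := by
    have := Nat.le_mul_of_pos_left (finrank F L) (finrank_pos (R := K) (M := F))
    rw [finrank_mul_finrank] at this
    omega
  obtain ⟨j, hj_inj, hj⟩ := exists_injective_range_eq_ker_trace (V := V) hV
  obtain ⟨φ, hφ_inj, hφ⟩ := exists_injective_trace_inv_eq_zero (K := K) (by omega : 1 < finrank F L)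
  have hφ_inv : ∀ c ≠ 0, φ c ≠ 0 ∧ ∃ v, j v = (φ c)⁻¹ := fun c hc =>
    ⟨(map_ne_zero_iff φ hφ_inj).mpr hc, LinearMap.mem_range.mp (hj ▸ hφ c hc)⟩
  set Θ := twistedTraceForm K j ∘ₗ φ
  have hΘ_inj : Function.Injective Θ := by
    refine (injective_iff_map_eq_zero Θ).mpr fun c h => by_contra fun hc => ?_
    obtain ⟨ha, v, hv⟩ := hφ_inv c hc
    exact twistedTraceForm_ne_zero hj hj_inj hV2 ha hv h
  refine ⟨LinearMap.range Θ, ?_, LinearMap.finrank_range_of_inj hΘ_inj, ?_, ?_, ?_⟩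
  · intro h
    have := LinearMap.finrank_range_of_inj hΘ_inj
    rw [h, finrank_bot] at this
    exact finrank_pos.ne' this.symm
  · rintro _ ⟨c, rfl⟩ x y
    exact twistedTraceForm_comm _ x y
  · rintro _ ⟨c, rfl⟩ hf
    obtain ⟨ha, v, hv⟩ := hφ_inv c (by rintro rfl; exact hf (map_zero Θ))
    exact formRank_twistedTraceForm hj hj_inj ha hv
  · rintro _ ⟨c, rfl⟩ _ ⟨c', rfl⟩ hli hker
    have hf : Θ c ≠ 0 := by simpa using hli.ne_zero 0
    have hg : Θ c' ≠ 0 := by simpa using hli.ne_zero 1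
    obtain ⟨ha, v, hv⟩ := hφ_inv c (by rintro rfl; exact hf (map_zero Θ))
    obtain ⟨ha', v', hv'⟩ := hφ_inv c' (by rintro rfl; exact hg (map_zero Θ))
    obtain ⟨s, hs⟩ := exists_smul_eq_of_ker_twistedTraceForm_eq hj hj_inj ha ha' hv hv' hker
    refine (LinearIndependent.pair_iff' (K := K) (V := V →ₗ[K] V →ₗ[K] K) hf).mp hli s ?_
    simp only [Θ, LinearMap.comp_apply, ← hs, map_smul]

end Tower

theorem different_radicals_even_dimension_general
    {K V : Type*} [Field K] [Fintype K] [AddCommGroup V] [Module K V]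
    (n m : ℕ) (h3m : n + 1 = 3 * m)
    (hn : Module.finrank K V = n) :
    ∃ M : Submodule K (V →ₗ[K] V →ₗ[K] K),
      M ≠ ⊥ ∧
      Module.finrank K M = m ∧
      (∀ f ∈ M, ∀ x y : V, f x y = f y x) ∧
      (∀ f ∈ M, f ≠ 0 → formRank K f = n - 1) ∧
      (∀ f ∈ M, ∀ g ∈ M, LinearIndependent K ![f, g] →
        LinearMap.ker f ≠ LinearMap.ker g) := by
  have : FiniteDimensional K V := Module.finite_of_finrank_pos (by omega)
  have : NeZero m := ⟨by omega⟩
  let p := ringChar K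
  have : Fact p.Prime := ⟨CharP.char_is_prime K p⟩
  let F := FiniteField.Extension K p m
  have : CharP F p := charP_of_injective_algebraMap (algebraMap K F).injective p
  let L := FiniteField.Extension F p 3
  let : Algebra K L := Algebra.compHom L (algebraMap K F)
  have : IsScalarTower K F L := IsScalarTower.of_algebraMap_eq fun _ => rfl
  have hFL : finrank F L = 3 := FiniteField.finrank_extension F p 3
  obtain ⟨M, hM⟩ := exists_constantRank_submodule_of_isScalarTower (V := V) (L := L)
    (by omega : 2 < finrank F L)
    (by rw [← finrank_mul_finrank K F L, hFL, FiniteField.finrank_extension, hn]; omega)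
  rw [FiniteField.finrank_extension, hn] at hM
  exact ⟨M, hM⟩

theorem different_radicals_even_dimension
    {K V : Type*} [Field K] [Fintype K] [AddCommGroup V] [Module K V] [FiniteDimensional K V]
    (n m : ℕ) (hn3 : 3 ≤ n) (hn_even : Even n) (h3m : n + 1 = 3 * m)
    (hn : Module.finrank K V = n) :
    ∃ M : Submodule K (V →ₗ[K] V →ₗ[K] K),
      M ≠ ⊥ ∧
      Module.finrank K M = m ∧
      (∀ f ∈ M, ∀ x y : V, f x y = f y x) ∧
      (∀ f ∈ M, f ≠ 0 → formRank K f = n - 1) ∧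
      (∀ f ∈ M, ∀ g ∈ M, LinearIndependent K ![f, g] →
        LinearMap.ker f ≠ LinearMap.ker g) :=
  different_radicals_even_dimension_general n m h3m hn
end

section
/- Let $K$ be a field of characteristic different from $2$ and let $V$ be a finite-dimensional vector space over $K$ with $\dim V \geq 2$. Let $f$ and $g$ be symmetric bilinear forms on $V$ of rank $2$, suppose $g$ is not of hyperbolic type, and suppose every nontrivial $K$-linear combination of $f$ and $g$ has rank $2$. Then $f$ and $g$ have the same radical, which has dimension $n - 2$ where $n = \dim V$. -/
/-- A rank-2 symmetric bilinear form is of hyperbolic type if some vector `w` outside its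
radical satisfies `f w w = 0`. -/
def IsHyperbolicType {K V : Type*} [Field K] [AddCommGroup V] [Module K V]
    (f : V →ₗ[K] V →ₗ[K] K) : Prop :=
  ∃ w : V, w ∉ LinearMap.ker f ∧ f w w = 0

open Module Submodule LinearMap Matrix

section

variable {K V : Type*} [Field K] [AddCommGroup V] [Module K V]

def gramMatrix {ι : Type*} (f : V →ₗ[K] V →ₗ[K] K) (v : ι → V) : Matrix ι ι K :=
  Matrix.of fun i j => f (v i) (v j)

theorem finrank_ker_add_formRank [FiniteDimensional K V] (f : V →ₗ[K] V →ₗ[K] K) :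
    finrank K (ker f) + formRank K f = finrank K V := by
  have := (ker f).finrank_le
  unfold formRank
  omega

theorem card_le_formRank_of_det_gramMatrix_ne_zero [FiniteDimensional K V]
    {ι : Type*} [Fintype ι] [DecidableEq ι] (f : V →ₗ[K] V →ₗ[K] K) (v : ι → V)
    (h : (gramMatrix f v).det ≠ 0) : Fintype.card ι ≤ formRank K f := by
  set M := gramMatrix f v
  let ψ : V →ₗ[K] ι → K := (LinearMap.pi fun j => LinearMap.applyₗ (v j)) ∘ₗ f
  have hψ : ∀ a : ι → K, ψ (∑ i, a i • v i) = a ᵥ* M := by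
    intro a
    ext j
    simp [ψ, M, gramMatrix, Matrix.vecMul, dotProduct]
  have hsurj : Function.Surjective ψ := fun c => ⟨∑ i, (c ᵥ* M⁻¹) i • v i, by
    rw [hψ, Matrix.vecMul_vecMul, Matrix.nonsing_inv_mul _ h.isUnit, Matrix.vecMul_one]⟩
  have hrank := ψ.finrank_range_add_finrank_ker
  rw [range_eq_top.mpr hsurj, finrank_top, finrank_fintype_fun_eq_card] at hrank
  have hker : finrank K (ker f) ≤ finrank K (ker ψ) := finrank_mono (ker_le_ker_comp f _)
  have := finrank_ker_add_formRank f
  omega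

theorem mem_ker_of_sup_eq_top {f : V →ₗ[K] V →ₗ[K] K} (hs : ∀ x y, f x y = f y x)
    {p : Submodule K V} (htop : ker f ⊔ p = ⊤) {s : V} (hsp : p ≤ ker (f s)) : s ∈ ker f := by
  have hker : ker f ≤ ker (f s) := fun x hx => by
    rw [mem_ker, hs, show f x = 0 from hx, LinearMap.zero_apply]
  rw [mem_ker, ← ker_eq_top, eq_top_iff, ← htop]
  exact sup_le hker hsp

theorem exists_det_gramMatrix_ne_zero [FiniteDimensional K V] {f : V →ₗ[K] V →ₗ[K] K}
    (hs : ∀ x y, f x y = f y x) (hf : formRank K f = 2) {w : V} (hw : w ∉ ker f) :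
    ∃ u, (gramMatrix f ![w, u]).det ≠ 0 := by
  have hdim := finrank_ker_add_formRank f
  obtain ⟨u, hu⟩ : ∃ u, u ∉ ker f ⊔ span K {w} := by
    by_contra! h
    have := finrank_sup_span_singleton hw
    rw [eq_top_iff'.mpr h, finrank_top] at this
    omega
  have htop : ker f ⊔ (span K {w} ⊔ span K {u}) = ⊤ := by
    apply eq_top_of_finrank_eq
    rw [← sup_assoc, finrank_sup_span_singleton hu, finrank_sup_span_singleton hw]
    omega
  have hmem : ∀ s, f s w = 0 → f s u = 0 → s ∈ ker f := fun s hsw hsu =>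
    mem_ker_of_sup_eq_top hs htop <| sup_le
      ((span_singleton_le_iff_mem _ _).mpr hsw) ((span_singleton_le_iff_mem _ _).mpr hsu)
  refine ⟨u, fun hδ => ?_⟩
  simp only [gramMatrix, det_fin_two, of_apply, cons_val_zero, cons_val_one] at hδ
  by_cases hww : f w w = 0
  · have hwu : f w u = 0 := by
      rw [hww, zero_mul, zero_sub, neg_eq_zero, hs u w] at hδ
      exact mul_self_eq_zero.mp hδ
    exact hw (hmem w hww hwu)
  · set s := f u w • w - f w w • u
    have hsker : s ∈ ker f := by
      refine hmem s ?_ ?_ <;>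
        simp only [s, map_sub, map_smul, LinearMap.sub_apply, LinearMap.smul_apply, smul_eq_mul]
      · ring
      · linear_combination -hδ
    have hus : u = (f w w)⁻¹ • (f u w • w - s) := by simp [s, smul_smul, hww]
    exact hu (hus ▸ smul_mem _ _
      (sub_mem (mem_sup_right (smul_mem _ _ (mem_span_singleton_self w))) (mem_sup_left hsker)))

theorem det_gramMatrix_smul_add {f g : V →ₗ[K] V →ₗ[K] K} (hf : ∀ x y, f x y = f y x)
    (hg : ∀ x y, g x y = g y x) {v w u : V} (hv : f v = 0) (hw : g w = 0) (t : K) :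
    (gramMatrix (t • f + g) ![v, w, u]).det =
      t ^ 2 * g v v * (gramMatrix f ![w, u]).det + t * f w w * (gramMatrix g ![v, u]).det := by
  simp only [gramMatrix, det_fin_three, det_fin_two, of_apply, LinearMap.add_apply,
    LinearMap.smul_apply, smul_eq_mul, cons_val_zero, cons_val_one, cons_val, cons_val_fin_one,
    hv, hw, hf _ v, hg _ w, LinearMap.zero_apply]
  ring

end

theorem same_radical_general
    {K V : Type*} [Field K] [AddCommGroup V] [Module K V] [FiniteDimensional K V]
    (hchar : ringChar K ≠ 2)
    (f g : V →ₗ[K] V →ₗ[K] K)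
    (hf_symm : ∀ x y : V, f x y = f y x) (hg_symm : ∀ x y : V, g x y = g y x)
    (hf : formRank K f = 2) (hg : formRank K g = 2)
    (hg_nothyp : ¬ IsHyperbolicType g)
    (hcomb : ∀ a b : K, (a ≠ 0 ∨ b ≠ 0) → formRank K (a • f + b • g) = 2) :
    LinearMap.ker f = LinearMap.ker g ∧
    Module.finrank K (LinearMap.ker f) = Module.finrank K V - 2 := by
  have hdim_f := finrank_ker_add_formRank f
  have hdim_g := finrank_ker_add_formRank g
  refine ⟨?_, by omega⟩
  by_contra hne
  obtain ⟨v, hvf, hvg⟩ := SetLike.not_le_iff_exists.mp fun hle =>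
    hne (eq_of_le_of_finrank_eq hle (by omega))
  obtain ⟨w, hwg, hwf⟩ := SetLike.not_le_iff_exists.mp fun hle =>
    hne (eq_of_le_of_finrank_eq hle (by omega)).symm
  have hgv : g v v ≠ 0 := fun h => hg_nothyp ⟨v, hvg, h⟩
  obtain ⟨u, hu⟩ := exists_det_gramMatrix_ne_zero hf_symm hf hwf
  have hsing : ∀ t : K, (gramMatrix (t • f + g) ![v, w, u]).det = 0 := fun t => by
    by_contra h
    have hrank := hcomb t 1 (.inr one_ne_zero)
    rw [one_smul] at hrank
    simpa [hrank] using card_le_formRank_of_det_gramMatrix_ne_zero _ _ h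
  have h₁ := det_gramMatrix_smul_add hf_symm hg_symm hvf hwg (u := u) 1
  have h₂ := det_gramMatrix_smul_add hf_symm hg_symm hvf hwg (u := u) (-1)
  rw [hsing] at h₁ h₂
  have hzero : 2 * (g v v * (gramMatrix f ![w, u]).det) = 0 := by linear_combination -h₁ - h₂
  exact mul_ne_zero (Ring.two_ne_zero hchar) (mul_ne_zero hgv hu) hzero

theorem same_radical
    {K V : Type*} [Field K] [AddCommGroup V] [Module K V] [FiniteDimensional K V]
    (hchar : ringChar K ≠ 2) (hdimV : 2 ≤ Module.finrank K V)
    (f g : V →ₗ[K] V →ₗ[K] K)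
    (hf_symm : ∀ x y : V, f x y = f y x) (hg_symm : ∀ x y : V, g x y = g y x)
    (hf : formRank K f = 2) (hg : formRank K g = 2)
    (hg_nothyp : ¬ IsHyperbolicType g)
    (hcomb : ∀ a b : K, (a ≠ 0 ∨ b ≠ 0) → formRank K (a • f + b • g) = 2) :
    LinearMap.ker f = LinearMap.ker g ∧
    Module.finrank K (LinearMap.ker f) = Module.finrank K V - 2 :=
  same_radical_general hchar f g hf_symm hg_symm hf hg hg_nothyp hcomb
end

section
/- Let $K$ be a field of characteristic different from $2$ and let $V$ be a finite-dimensional vector space over $K$ with $\dim V \geq 2$. Let $\mathcal{M}$ be a constant rank $2$ subspace of the space of symmetric bilinear forms on $V$ that contains an element that is not of hyperbolic type. Then $\dim \mathcal{M} \leq 2$. -/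
/-!
Fix a non-hyperbolic `g ∈ M`. Its radical `R` has codimension 2, and since `g` is anisotropic
modulo `R`, there is a `g`-orthogonal pair `w₁, w₂` with `g w₁ w₁, g w₂ w₂ ≠ 0` spanning a
complement of `R`. Every form of the pencil spanned by `g` and some `f ∈ M` has rank at most 2,
so the `3 × 3` Gram determinants `D₊, D₋, D` of `g + f`, `g - f` and `f` at `(w₁, w₂, u)`,
`u ∈ R`, vanish. Now `D₊ - D₋ - 2D = 2 g(w₁,w₁) g(w₂,w₂) f(u,u)`, and once `f(u,u) = 0`,
`D₊ + D₋ = -2 g(w, w)` for `w = f(u,w₂) w₁ + f(u,w₁) w₂`; anisotropy then kills `f(u,w₁), f(u,w₂)`.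
By polarization `R` lies in the radical of every `f ∈ M`, hence equals it when `f ≠ 0`. So
`f ↦ (f(w₁,w₁), f(w₁,w₂))` is injective on `M`: if both values vanish, `w₁` is in the radical
of `f`.
-/

open LinearMap Module Submodule

section

variable {K V : Type*} [Field K] [AddCommGroup V] [Module K V]

theorem formRank_eq_finrank_range [FiniteDimensional K V] (f : V →ₗ[K] V →ₗ[K] K) :
    formRank K f = finrank K (range f) := by
  have := f.finrank_range_add_finrank_ker
  unfold formRank
  omega

theorem det_gram_eq_zero_of_finrank_range_lt [FiniteDimensional K V] {ι : Type*} [Fintype ι]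
    [DecidableEq ι] (B : V →ₗ[K] V →ₗ[K] K) (v : ι → V)
    (h : finrank K (range B) < Fintype.card ι) :
    (Matrix.of fun i j => B (v i) (v j)).det = 0 := by
  by_contra hdet
  have hrows : LinearIndependent K (Matrix.of fun i j => B (v i) (v j)).row :=
    Matrix.linearIndependent_rows_of_isUnit ((Matrix.isUnit_iff_isUnit_det _).2 (Ne.isUnit hdet))
  let w : ι → range B := fun i => ⟨B (v i), mem_range_self B (v i)⟩
  have hw : LinearIndependent K w :=
    hrows.of_comp ((LinearMap.pi fun j => applyₗ (v j)) ∘ₗ (range B).subtype)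
  exact h.not_ge hw.fintype_card_le_finrank

theorem det_gram_fin_three_eq_zero [FiniteDimensional K V] {B : V →ₗ[K] V →ₗ[K] K}
    (hB : finrank K (range B) ≤ 2) (hsymm : ∀ x y, B x y = B y x) (x y z : V) :
    B x x * B y y * B z z + 2 * B x y * B y z * B x z
      - B x x * B y z ^ 2 - B y y * B x z ^ 2 - B z z * B x y ^ 2 = 0 := by
  have h := det_gram_eq_zero_of_finrank_range_lt B ![x, y, z] (by simp; omega)
  rw [Matrix.det_fin_three] at h
  simp only [Matrix.of_apply, Matrix.cons_val_zero, Matrix.cons_val_one, Matrix.cons_val_two,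
    Matrix.vecHead, Matrix.vecTail, Function.comp_apply, Fin.succ_zero_eq_one] at h
  rw [hsymm y x, hsymm z x, hsymm z y] at h
  linear_combination h

theorem exists_orthogonal_pair_sup_ker_eq_top [FiniteDimensional K V]
    {g : V →ₗ[K] V →ₗ[K] K} (haniso : ∀ w, g w w = 0 → w ∈ ker g)
    (hrank : finrank K (ker g) + 2 = finrank K V) :
    ∃ w₁ w₂ : V, g w₁ w₁ ≠ 0 ∧ g w₂ w₂ ≠ 0 ∧ g w₁ w₂ = 0 ∧ ker g ⊔ span K {w₁, w₂} = ⊤ := by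
  obtain ⟨w₁, -, hw₁⟩ := SetLike.exists_of_lt (lt_top_of_finrank_lt_finrank (s := ker g) (by omega))
  have h₁ : g w₁ w₁ ≠ 0 := fun h => hw₁ (haniso w₁ h)
  have hW₁ := finrank_sup_span_singleton hw₁
  obtain ⟨v, -, hv⟩ :=
    SetLike.exists_of_lt (lt_top_of_finrank_lt_finrank (s := ker g ⊔ K ∙ w₁) (by omega))
  set w₂ := v - (g w₁ v / g w₁ w₁) • w₁
  have hw₂ : w₂ ∉ ker g ⊔ K ∙ w₁ := fun h =>
    hv (by simpa [w₂] using add_mem h (mem_sup_right (smul_mem _ (g w₁ v / g w₁ w₁)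
      (mem_span_singleton_self w₁))))
  refine ⟨w₁, w₂, h₁, fun h => hw₂ (mem_sup_left (haniso w₂ h)), ?_, ?_⟩
  · simp [w₂, h₁]
  · apply eq_top_of_finrank_eq
    rw [span_insert, ← sup_assoc, finrank_sup_span_singleton hw₂, hW₁]
    omega

theorem le_ker_of_sup_eq_top {f : V →ₗ[K] V →ₗ[K] K} (hsymm : ∀ x y, f x y = f y x)
    (htwo : (2 : K) ≠ 0) {W U : Submodule K V} (hWU : W ⊔ U = ⊤)
    (hW : ∀ u ∈ W, f u u = 0) (hU : ∀ u ∈ W, U ≤ ker (f u)) : W ≤ ker f := by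
  intro u hu
  have hWu : W ≤ ker (f u) := fun u' hu' => by
    have h := hW _ (add_mem hu hu')
    simp only [map_add, LinearMap.add_apply, hW u hu, hW u' hu', hsymm u' u] at h
    exact (mul_eq_zero.1 (by linear_combination h : (2 : K) * f u u' = 0)).resolve_left htwo
  rw [mem_ker, ← ker_eq_top, eq_top_iff, ← hWU]
  exact sup_le hWu (hU u hu)

theorem apply_eq_zero_of_mem_ker_of_pencil [FiniteDimensional K V] {g f : V →ₗ[K] V →ₗ[K] K}
    (hg : ∀ x y, g x y = g y x) (hf : ∀ x y, f x y = f y x) (htwo : (2 : K) ≠ 0)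
    (hpencil : ∀ s t : K, finrank K (range (s • g + t • f)) ≤ 2)
    (haniso : ∀ w, g w w = 0 → w ∈ ker g) {w₁ w₂ u : V}
    (h₁ : g w₁ w₁ ≠ 0) (h₂ : g w₂ w₂ ≠ 0) (h₁₂ : g w₁ w₂ = 0) (hu : u ∈ ker g) :
    f u u = 0 ∧ f u w₁ = 0 ∧ f u w₂ = 0 := by
  have hgu : g u = 0 := hu
  have hgu₁ : g w₁ u = 0 := by rw [hg, hgu, LinearMap.zero_apply]
  have hgu₂ : g w₂ u = 0 := by rw [hg, hgu, LinearMap.zero_apply]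
  have E s t :=
    det_gram_fin_three_eq_zero (hpencil s t) (fun x y => by simp [hg x y, hf x y]) w₁ w₂ u
  have Eadd := E 1 1
  have Esub := E 1 (-1)
  have Ef := E 0 1
  simp only [LinearMap.add_apply, LinearMap.smul_apply, smul_eq_mul, hgu, hgu₁, hgu₂, h₁₂,
    LinearMap.zero_apply] at Eadd Esub Ef
  have huu : f u u = 0 := by
    have h : 2 * (g w₁ w₁ * g w₂ w₂) * f u u = 0 := by linear_combination Eadd - Esub - 2 * Ef
    simpa [htwo, h₁, h₂] using h
  set w := f u w₂ • w₁ + f u w₁ • w₂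
  have hw : w ∈ ker g := haniso w <| by
    have h : 2 * g w w = 0 := by
      simp only [w, map_add, map_smul, LinearMap.add_apply, LinearMap.smul_apply, smul_eq_mul,
        h₁₂, hg w₂ w₁, hf u w₁, hf u w₂] at Eadd Esub ⊢
      rw [huu] at Eadd Esub
      linear_combination -Eadd - Esub
    simpa [htwo] using h
  have hw₁ : g w w₁ = f u w₂ * g w₁ w₁ := by simp [w, hg w₂ w₁, h₁₂]
  have hw₂ : g w w₂ = f u w₁ * g w₂ w₂ := by simp [w, h₁₂]
  rw [show g w = 0 from hw, LinearMap.zero_apply] at hw₁ hw₂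
  exact ⟨huu, by simpa [h₂] using hw₂.symm, by simpa [h₁] using hw₁.symm⟩

theorem ker_le_ker_of_pencil [FiniteDimensional K V] {g f : V →ₗ[K] V →ₗ[K] K}
    (hg : ∀ x y, g x y = g y x) (hf : ∀ x y, f x y = f y x) (htwo : (2 : K) ≠ 0)
    (hpencil : ∀ s t : K, finrank K (range (s • g + t • f)) ≤ 2)
    (haniso : ∀ w, g w w = 0 → w ∈ ker g) {w₁ w₂ : V}
    (h₁ : g w₁ w₁ ≠ 0) (h₂ : g w₂ w₂ ≠ 0) (h₁₂ : g w₁ w₂ = 0)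
    (hspan : ker g ⊔ span K {w₁, w₂} = ⊤) : ker g ≤ ker f := by
  have key u (hu : u ∈ ker g) :=
    apply_eq_zero_of_mem_ker_of_pencil hg hf htwo hpencil haniso h₁ h₂ h₁₂ hu
  refine le_ker_of_sup_eq_top hf htwo hspan (fun u hu => (key u hu).1) fun u hu => ?_
  rw [span_le, Set.insert_subset_iff, Set.singleton_subset_iff]
  exact (key u hu).2

theorem eq_zero_of_ker_le_of_apply_eq_zero [FiniteDimensional K V] {g f : V →ₗ[K] V →ₗ[K] K}
    (hf : ∀ x y, f x y = f y x) (hker : f ≠ 0 → finrank K (ker f) = finrank K (ker g))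
    (hle : ker g ≤ ker f) {w₁ w₂ : V} (hw₁ : w₁ ∉ ker g) (hspan : ker g ⊔ span K {w₁, w₂} = ⊤)
    (h₁₁ : f w₁ w₁ = 0) (h₁₂ : f w₁ w₂ = 0) : f = 0 := by
  by_contra hf0
  have heq : ker g = ker f := eq_of_le_of_finrank_eq hle (hker hf0).symm
  refine hw₁ (heq ▸ mem_ker.2 (ker_eq_top.1 (eq_top_iff.2 (hspan ▸ sup_le ?_ ?_))))
  · exact fun u hu => by rw [mem_ker, hf, show f u = 0 from hle hu, LinearMap.zero_apply]
  · rw [span_le, Set.insert_subset_iff, Set.singleton_subset_iff]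
    exact ⟨h₁₁, h₁₂⟩

theorem finrank_le_two_of_apply_eq_zero_imp_eq_zero (M : Submodule K (V →ₗ[K] V →ₗ[K] K))
    (w₁ w₂ : V) (h : ∀ f ∈ M, f w₁ w₁ = 0 → f w₁ w₂ = 0 → f = 0) : finrank K M ≤ 2 := by
  let Φ : M →ₗ[K] K × K :=
    ((applyₗ w₁ ∘ₗ applyₗ w₁).prod (applyₗ w₂ ∘ₗ applyₗ w₁)) ∘ₗ M.subtype
  have hΦ : Function.Injective Φ := by
    rintro ⟨f, hf⟩ ⟨f', hf'⟩ hΦf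
    simp only [Φ, LinearMap.comp_apply, LinearMap.prod_apply, Function.prod,
      Submodule.subtype_apply, applyₗ_apply_apply, Prod.mk.injEq] at hΦf
    -- `M.sub_mem` does not elaborate: the `AddCommMonoid` instance in the type of `M` is not
    -- reducibly the one underlying `LinearMap.addCommGroup`
    have hd : f - f' ∈ M := by
      convert M.add_mem hf (M.smul_mem (-1 : K) hf') using 1
      ext
      simp [sub_eq_add_neg]
    exact Subtype.ext (sub_eq_zero.1 (h _ hd (by simp [hΦf.1]) (by simp [hΦf.2])))
  simpa using LinearMap.finrank_le_finrank_of_injective hΦ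

end

theorem dimension_at_most_2_general
    {K V : Type*} [Field K] [AddCommGroup V] [Module K V] [FiniteDimensional K V]
    (hchar : ringChar K ≠ 2)
    (M : Submodule K (V →ₗ[K] V →ₗ[K] K))
    (hsymm : ∀ f ∈ M, ∀ x y : V, f x y = f y x)
    (hrank : ∀ f ∈ M, f ≠ 0 → formRank K f = 2)
    (hex : ∃ g ∈ M, g ≠ 0 ∧ ¬ IsHyperbolicType g) :
    Module.finrank K M ≤ 2 := by
  have htwo : (2 : K) ≠ 0 := Ring.two_ne_zero hchar
  have hker : ∀ f ∈ M, f ≠ 0 → finrank K (ker f) + 2 = finrank K V := fun f hf hf0 => by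
    have := f.finrank_range_add_finrank_ker
    rw [← hrank f hf hf0, formRank_eq_finrank_range]
    omega
  have hrange : ∀ f ∈ M, finrank K (range f) ≤ 2 := fun f hf => by
    obtain rfl | hf0 := eq_or_ne f 0
    · rw [LinearMap.range_zero, finrank_bot]
      omega
    · rw [← formRank_eq_finrank_range, hrank f hf hf0]
  obtain ⟨g, hgM, hg0, hg⟩ := hex
  have haniso : ∀ w, g w w = 0 → w ∈ ker g := fun w hw => by_contra fun h => hg ⟨w, h, hw⟩
  obtain ⟨w₁, w₂, h₁, h₂, h₁₂, hspan⟩ :=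
    exists_orthogonal_pair_sup_ker_eq_top haniso (hker g hgM hg0)
  have hw₁ : w₁ ∉ ker g := fun h => h₁ (by rw [show g w₁ = 0 from h, LinearMap.zero_apply])
  refine finrank_le_two_of_apply_eq_zero_imp_eq_zero M w₁ w₂ fun f hf hf₁₁ hf₁₂ => ?_
  have hle : ker g ≤ ker f := ker_le_ker_of_pencil (hsymm g hgM) (hsymm f hf) htwo
    (fun s t => hrange _ (M.add_mem (M.smul_mem s hgM) (M.smul_mem t hf))) haniso h₁ h₂ h₁₂ hspan
  exact eq_zero_of_ker_le_of_apply_eq_zero (hsymm f hf)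
    (fun hf0 => Nat.add_right_cancel ((hker f hf hf0).trans (hker g hgM hg0).symm))
    hle hw₁ hspan hf₁₁ hf₁₂

theorem dimension_at_most_2
    {K V : Type*} [Field K] [AddCommGroup V] [Module K V] [FiniteDimensional K V]
    (hchar : ringChar K ≠ 2) (hdimV : 2 ≤ Module.finrank K V)
    (M : Submodule K (V →ₗ[K] V →ₗ[K] K)) (hM0 : M ≠ ⊥)
    (hsymm : ∀ f ∈ M, ∀ x y : V, f x y = f y x)
    (hrank : ∀ f ∈ M, f ≠ 0 → formRank K f = 2)
    (hex : ∃ g ∈ M, g ≠ 0 ∧ ¬ IsHyperbolicType g) :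
    Module.finrank K M ≤ 2 :=
  dimension_at_most_2_general hchar M hsymm hrank hex
end

section
/- Let $V$ be a vector space of dimension $n \geq 2$ over $\mathbb{F}_q$ where $q$ is a power of an odd prime, and let $\mathcal{M}$ be a constant rank $2$ subspace of the space of symmetric bilinear forms on $V$ in which every nonzero element is of hyperbolic type. Then $\dim \mathcal{M} \leq n - 1$. -/
/-!
Double count the pairs `(f, v) ∈ M × V` with `f v v = 0`. A nonzero `f ∈ M` has a hyperbolic
pair `w, u` (`f w w = f u u = 0`, `f w u = 1`), and the rank condition forces
`f = f w ⊗ f u + f u ⊗ f w` with `f w, f u` independent; so its isotropic vectors form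
`ker (f w) ∪ ker (f u)`, a set of `2 q^(n-1) - q^(n-2)` elements. For fixed `v`, `f ↦ f v v`
is a linear functional on `M`, vanishing on `q^m` or `q^(m-1)` forms, `m = dim M`. Hence `q^(m-1)`
divides the total, which is `≡ q^(n-2) mod q^(n-1)`; this rules out `m ≥ n`.
-/

open LinearMap Module Finset

lemma finrank_ker_add_of_surjective {K V W : Type*} [Field K] [AddCommGroup V] [Module K V]
    [FiniteDimensional K V] [AddCommGroup W] [Module K W] {φ : V →ₗ[K] W}
    (hφ : Function.Surjective φ) : finrank K (ker φ) + finrank K W = finrank K V := by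
  rw [← finrank_range_add_finrank_ker φ, range_eq_top.2 hφ, finrank_top, add_comm]

lemma le_sub_one_of_pow_sub_one_dvd {q n m c T : ℕ} (hq : 1 < q) (hn : 2 ≤ n)
    (hc : c + q ^ (n - 2) = 2 * q ^ (n - 1)) (hT : T + c = q ^ n + q ^ m * c)
    (hdvd : q ^ (m - 1) ∣ T) : m ≤ n - 1 := by
  by_contra! hm
  have hT' : q ^ (n - 1) ∣ T := (pow_dvd_pow q (by omega)).trans hdvd
  have hc' : q ^ (n - 1) ∣ c := (Nat.dvd_add_right hT').mp <| hT ▸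
    dvd_add (pow_dvd_pow q (by omega)) (dvd_mul_of_dvd_left (pow_dvd_pow q (by omega)) c)
  have : q ^ (n - 1) ∣ q ^ (n - 2) := (Nat.dvd_add_right hc').mp (hc ▸ dvd_mul_left _ 2)
  have := (Nat.pow_dvd_pow_iff_le_right hq).mp this
  omega

section FiniteField

variable {K : Type*} [Field K]

lemma two_ne_zero_of_odd_card [Fintype K] (hq : Odd (Fintype.card K)) : (2 : K) ≠ 0 :=
  Ring.two_ne_zero fun hchar => by
    have := FiniteField.even_card_of_char_two hchar
    rw [Nat.odd_iff] at hq
    omega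

lemma card_filter_apply_eq_zero [Fintype K] {V W : Type*} [AddCommGroup V] [Module K V]
    [Fintype V] [AddCommGroup W] [Module K W] [DecidableEq W] (φ : V →ₗ[K] W) :
    #{v | φ v = 0} = Fintype.card K ^ finrank K (ker φ) := by
  rw [← Fintype.card_subtype, ← Nat.card_eq_fintype_card, ← Nat.card_eq_fintype_card,
    ← Module.natCard_eq_pow_finrank]
  rfl

variable [DecidableEq K] {W V : Type*} [AddCommGroup W] [Module K W] [Fintype W] [Fintype V]

lemma pow_finrank_sub_one_dvd_card_ker [Fintype K] (φ : W →ₗ[K] K) :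
    Fintype.card K ^ (finrank K W - 1) ∣ #{w | φ w = 0} := by
  rw [card_filter_apply_eq_zero]
  refine pow_dvd_pow _ ?_
  have := finrank_range_add_finrank_ker φ
  have := (range φ).finrank_le.trans_eq (finrank_self K)
  omega

lemma pow_finrank_sub_one_dvd_sum_card_zeros [Fintype K] (Q : W →ₗ[K] V → K) :
    Fintype.card K ^ (finrank K W - 1) ∣ ∑ w, #{v | Q w v = 0} := by
  rw [show ∑ w, #{v | Q w v = 0} = ∑ v, #{w | Q w v = 0} by
    simp only [card_filter]; exact sum_comm]
  exact dvd_sum fun v _ => pow_finrank_sub_one_dvd_card_ker ((proj v).comp Q)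

lemma sum_card_zeros_add_of_forall_ne_zero (Q : W →ₗ[K] V → K) (c : ℕ)
    (hc : ∀ w ≠ 0, #{v | Q w v = 0} = c) :
    ∑ w, #{v | Q w v = 0} + c = Fintype.card V + Fintype.card W * c := by
  classical
  rw [← add_sum_erase _ _ (mem_univ 0), sum_congr rfl fun w hw => hc w (ne_of_mem_erase hw),
    sum_const, card_erase_of_mem (mem_univ _), card_univ, map_zero, smul_eq_mul]
  obtain ⟨k, hk⟩ := Nat.exists_eq_add_one_of_ne_zero (Fintype.card_ne_zero (α := W))
  simp only [Pi.zero_apply, filter_true, card_univ, hk, Nat.add_sub_cancel]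
  ring

end FiniteField

section HyperbolicPair

variable {K V : Type*} [Field K] [AddCommGroup V] [Module K V] {f : V →ₗ[K] V →ₗ[K] K}

lemma exists_hyperbolic_pair (h2 : (2 : K) ≠ 0) (hsymm : ∀ x y, f x y = f y x)
    (hf : IsHyperbolicType f) : ∃ w u, f w w = 0 ∧ f u u = 0 ∧ f w u = 1 := by
  obtain ⟨w, hw, hww⟩ := hf
  obtain ⟨u, hu⟩ : ∃ u, f w u ≠ 0 := by
    by_contra! h
    exact hw (LinearMap.ext h)
  set u₁ := (f w u)⁻¹ • u
  have hwu₁ : f w u₁ = 1 := by simp [u₁, hu]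
  refine ⟨w, u₁ - (f u₁ u₁ / 2) • w, hww, ?_, ?_⟩
  · simp only [map_sub, map_smul, LinearMap.sub_apply, LinearMap.smul_apply, smul_eq_mul, hww,
      hwu₁, hsymm u₁ w]
    field_simp
    ring
  · simp [hww, hwu₁]

variable {w u : V} (hsymm : ∀ x y, f x y = f y x) (hw : f w w = 0) (hu : f u u = 0)
  (hwu : f w u = 1)
include hsymm hw hu hwu

lemma surjective_prod_of_hyperbolic_pair : Function.Surjective ((f w).prod (f u)) :=
  fun ⟨s, t⟩ => ⟨s • u + t • w, by simp [hw, hu, hwu, hsymm u w]⟩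

lemma ker_eq_ker_prod_of_hyperbolic_pair [FiniteDimensional K V] (hrank : formRank K f = 2) :
    ker f = ker ((f w).prod (f u)) := by
  refine Submodule.eq_of_le_of_finrank_eq (fun x hx => ?_) ?_
  · rw [mem_ker] at hx ⊢
    simp [hsymm w x, hsymm u x, hx]
  · have hprod :=
      finrank_ker_add_of_surjective (surjective_prod_of_hyperbolic_pair hsymm hw hu hwu)
    rw [finrank_prod, finrank_self] at hprod
    have := (ker f).finrank_le
    unfold formRank at hrank
    omega

lemma apply_eq_of_hyperbolic_pair [FiniteDimensional K V] (hrank : formRank K f = 2) (v y : V) :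
    f v y = f w v * f u y + f u v * f w y := by
  have hv : v - f w v • u - f u v • w ∈ ker f := by
    rw [ker_eq_ker_prod_of_hyperbolic_pair hsymm hw hu hwu hrank]
    simp [hw, hu, hwu, hsymm u w]
  have := congrArg (· y) (mem_ker.mp hv)
  simp only [map_sub, map_smul, LinearMap.sub_apply, LinearMap.smul_apply, smul_eq_mul,
    LinearMap.zero_apply] at this
  linear_combination this

end HyperbolicPair

lemma card_filter_apply_self_eq_zero_add_pow {K V : Type*} [Field K] [Fintype K] [DecidableEq K]
    [AddCommGroup V] [Module K V] [Fintype V] {f : V →ₗ[K] V →ₗ[K] K} (h2 : (2 : K) ≠ 0)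
    (hsymm : ∀ x y, f x y = f y x) (hrank : formRank K f = 2) (hf : IsHyperbolicType f) :
    #{v | f v v = 0} + Fintype.card K ^ (finrank K V - 2) =
      2 * Fintype.card K ^ (finrank K V - 1) := by
  classical
  obtain ⟨w, u, hw, hu, hwu⟩ := exists_hyperbolic_pair h2 hsymm hf
  have hsurj := surjective_prod_of_hyperbolic_pair hsymm hw hu hwu
  have hzero (v : V) : f v v = 0 ↔ f w v = 0 ∨ f u v = 0 := by
    rw [apply_eq_of_hyperbolic_pair hsymm hw hu hwu hrank, mul_comm (f u v), ← two_mul,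
      mul_eq_zero, mul_eq_zero, or_iff_right h2]
  have hboth (v : V) : f w v = 0 ∧ f u v = 0 ↔ (f w).prod (f u) v = 0 := by
    simp [Prod.ext_iff]
  have hprod := finrank_ker_add_of_surjective hsurj
  have hfst := finrank_ker_add_of_surjective (φ := f w) (Prod.fst_surjective.comp hsurj)
  have hsnd := finrank_ker_add_of_surjective (φ := f u) (Prod.snd_surjective.comp hsurj)
  rw [finrank_prod, finrank_self] at hprod
  rw [finrank_self] at hfst hsnd
  calc #{v | f v v = 0} + Fintype.card K ^ (finrank K V - 2)
      = #{v | f w v = 0} + #{v | f u v = 0} := by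
        rw [filter_congr fun v _ => hzero v, filter_or, ← card_union_add_card_inter,
          ← filter_and, filter_congr fun v _ => hboth v, card_filter_apply_eq_zero, ← hprod,
          Nat.add_sub_cancel]
    _ = 2 * Fintype.card K ^ (finrank K V - 1) := by
        rw [card_filter_apply_eq_zero, card_filter_apply_eq_zero, ← hfst, Nat.add_sub_cancel,
          show finrank K (ker (f u)) = finrank K (ker (f w)) by omega, two_mul]

theorem dimension_at_most_n_sub_one_general
    {K V : Type*} [Field K] [Fintype K] [AddCommGroup V] [Module K V] [FiniteDimensional K V]
    (hq_odd : Odd (Fintype.card K))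
    (n : ℕ) (hn2 : 2 ≤ n) (hn : Module.finrank K V = n)
    (M : Submodule K (V →ₗ[K] V →ₗ[K] K))
    (hsymm : ∀ f ∈ M, ∀ x y : V, f x y = f y x)
    (hrank : ∀ f ∈ M, f ≠ 0 → formRank K f = 2)
    (hhyp : ∀ f ∈ M, f ≠ 0 → IsHyperbolicType f) :
    Module.finrank K M ≤ n - 1 := by
  classical
  have : Finite V := Module.finite_of_finite K
  have : Fintype V := Fintype.ofFinite V
  -- instance search does not find the group structure of a submodule of bilinear maps
  let _ : AddCommGroup M := @Submodule.addCommGroup K (V →ₗ[K] V →ₗ[K] K) _ _ _ M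
  have : Finite M := Module.finite_of_finite K
  have : Fintype M := Fintype.ofFinite M
  let Q : M →ₗ[K] V → K :=
    LinearMap.pi fun v => (applyₗ v).comp ((applyₗ v).comp M.subtype)
  have hrow (f : M) (hf : f ≠ 0) :
      #{v | Q f v = 0} = 2 * Fintype.card K ^ (n - 1) - Fintype.card K ^ (n - 2) := by
    have hf' : (f : V →ₗ[K] V →ₗ[K] K) ≠ 0 := by simpa using hf
    have := card_filter_apply_self_eq_zero_add_pow (two_ne_zero_of_odd_card hq_odd)
      (hsymm f f.2) (hrank f f.2 hf') (hhyp f f.2 hf')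
    rw [hn] at this
    exact Nat.eq_sub_of_add_eq this
  have hsum := sum_card_zeros_add_of_forall_ne_zero (W := M) Q _ hrow
  rw [card_eq_pow_finrank (K := K) (V := V), card_eq_pow_finrank (K := K) (V := M), hn] at hsum
  have hle : Fintype.card K ^ (n - 2) ≤ 2 * Fintype.card K ^ (n - 1) :=
    (Nat.pow_le_pow_right Fintype.card_pos (by omega)).trans (Nat.le_mul_of_pos_left _ two_pos)
  exact le_sub_one_of_pow_sub_one_dvd Fintype.one_lt_card hn2 (Nat.sub_add_cancel hle) hsum
    (pow_finrank_sub_one_dvd_sum_card_zeros Q)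

theorem dimension_at_most_n_sub_one
    {K V : Type*} [Field K] [Fintype K] [AddCommGroup V] [Module K V] [FiniteDimensional K V]
    (hq_odd : Odd (Fintype.card K))
    (n : ℕ) (hn2 : 2 ≤ n) (hn : Module.finrank K V = n)
    (M : Submodule K (V →ₗ[K] V →ₗ[K] K)) (hM0 : M ≠ ⊥)
    (hsymm : ∀ f ∈ M, ∀ x y : V, f x y = f y x)
    (hrank : ∀ f ∈ M, f ≠ 0 → formRank K f = 2)
    (hhyp : ∀ f ∈ M, f ≠ 0 → IsHyperbolicType f) :
    Module.finrank K M ≤ n - 1 :=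
  dimension_at_most_n_sub_one_general hq_odd n hn2 hn M hsymm hrank hhyp
end

section
/- The set of real $2 \times 2$ matrices of the form $\begin{pmatrix} a & b \\ b & -a \end{pmatrix}$, as $a$ and $b$ range over $\mathbb{R}$, is a two-dimensional subspace of the real symmetric $2 \times 2$ matrices, every nonzero element of which defines a symmetric bilinear form on $\mathbb{R}^2$ of rank $2$ and hyperbolic type. (Thus the bound $\dim \mathcal{M} \leq n-1$ for constant rank $2$ subspaces of hyperbolic type fails over $\mathbb{R}$.) -/
open Matrix

/-!
The matrices `!![a, b; b, -a]` are the image of the injective linear map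
`(a, b) ↦ !![a, b; b, -a]`, so they form a plane. Their determinant is `-(a² + b²)`, which
vanishes over `ℝ` only at `a = b = 0`; hence every nonzero member is invertible, so of rank `2`
with trivial radical. Finally a binary form `p x² + 2q xy + s y²` whose discriminant
`q² - ps = -det` is a square `r²` has the isotropic vector `(r - q, p)`, or `(1, 0)` when `p = 0`.
-/

namespace Matrix

variable {R : Type*} [CommRing R]

variable (R) in
def finTwoSymmTraceless : R × R →ₗ[R] Matrix (Fin 2) (Fin 2) R where
  toFun x := !![x.1, x.2; x.2, -x.1]
  map_add' x y := by ext i j; fin_cases i <;> fin_cases j <;> simp [add_comm]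
  map_smul' c x := by ext i j; fin_cases i <;> fin_cases j <;> simp

theorem finTwoSymmTraceless_apply (x : R × R) :
    finTwoSymmTraceless R x = !![x.1, x.2; x.2, -x.1] :=
  rfl

theorem finTwoSymmTraceless_injective : Function.Injective (finTwoSymmTraceless R) := by
  intro x y h
  have h00 := congrFun (congrFun h 0) 0
  have h01 := congrFun (congrFun h 0) 1
  simp only [finTwoSymmTraceless_apply, of_apply, cons_val', cons_val_zero, cons_val_one,
    empty_val', cons_val_fin_one] at h00 h01
  exact Prod.ext h00 h01

theorem isSymm_finTwoSymmTraceless (x : R × R) : (finTwoSymmTraceless R x).IsSymm := by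
  ext i j; fin_cases i <;> fin_cases j <;> rfl

theorem det_finTwoSymmTraceless (x : R × R) :
    (finTwoSymmTraceless R x).det = -(x.1 * x.1 + x.2 * x.2) := by
  rw [finTwoSymmTraceless_apply, det_fin_two_of]
  ring

theorem exists_ne_zero_dotProduct_mulVec_self_eq_zero_of_isSquare_neg_det [Nontrivial R]
    (p q s : R) (h : IsSquare (-(!![p, q; q, s]).det)) :
    ∃ w : Fin 2 → R, w ≠ 0 ∧ w ⬝ᵥ !![p, q; q, s] *ᵥ w = 0 := by
  by_cases hp : p = 0
  · refine ⟨![1, 0], fun h10 => one_ne_zero (congrFun h10 0), ?_⟩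
    simp [hp, dotProduct, mulVec, Fin.sum_univ_two]
  · obtain ⟨r, hr⟩ := h
    rw [det_fin_two_of] at hr
    refine ⟨![r - q, p], fun hw => hp (congrFun hw 1), ?_⟩
    simp only [dotProduct, mulVec, Fin.sum_univ_two, of_apply, cons_val', cons_val_zero,
      cons_val_one, empty_val', cons_val_fin_one]
    linear_combination (-p) * hr

end Matrix

theorem real_hyperbolic_constant_rank_2_plane :
    ∃ M : Submodule ℝ (Matrix (Fin 2) (Fin 2) ℝ),
      (↑M : Set (Matrix (Fin 2) (Fin 2) ℝ)) = {A | ∃ a b : ℝ, A = !![a, b; b, -a]} ∧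
      Module.finrank ℝ M = 2 ∧
      ∀ A ∈ M, A ≠ 0 →
        A.IsSymm ∧ A.rank = 2 ∧
        -- the bilinear form `f(x, y) = xᵀ A y` is of hyperbolic type:
        -- some `w` outside the radical of the form satisfies `f(w, w) = 0`
        ∃ w : Fin 2 → ℝ, (∃ u : Fin 2 → ℝ, w ⬝ᵥ A.mulVec u ≠ 0) ∧ w ⬝ᵥ A.mulVec w = 0 := by
  refine ⟨LinearMap.range (finTwoSymmTraceless ℝ), ?_, ?_, ?_⟩
  · ext A
    simp [finTwoSymmTraceless_apply, eq_comm]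
  · rw [LinearMap.finrank_range_of_inj finTwoSymmTraceless_injective]
    simp
  · rintro _ ⟨x, rfl⟩ hA
    have hx : x ≠ 0 := fun hx => hA (by rw [hx, map_zero])
    have hdet : (finTwoSymmTraceless ℝ x).det ≠ 0 := by
      rw [det_finTwoSymmTraceless, neg_ne_zero, Ne, mul_self_add_mul_self_eq_zero]
      exact fun h => hx (Prod.ext h.1 h.2)
    have hsq : IsSquare (-(finTwoSymmTraceless ℝ x).det) := by
      rw [det_finTwoSymmTraceless, neg_neg]
      exact ⟨√(x.1 * x.1 + x.2 * x.2),
        (Real.mul_self_sqrt (add_nonneg (mul_self_nonneg _) (mul_self_nonneg _))).symm⟩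
    obtain ⟨w, hw, hiso⟩ :=
      exists_ne_zero_dotProduct_mulVec_self_eq_zero_of_isSquare_neg_det _ _ _ hsq
    exact ⟨isSymm_finTwoSymmTraceless x, by simp [rank_of_det_ne_zero hdet], w,
      (nondegenerate_of_det_ne_zero hdet).exists_not_ortho_of_ne_zero hw, hiso⟩
end
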